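/- Let ω : ℝ → ℝ be continuous with at most linear growth and let σ > 0, γ ≥ 1. Define r(ω) = ∫_{-∞}^0 e^{σξ}(1 + |ω(ξ)|² + |ω(ξ)|^{γ+1}) dξ, and for τ ∈ ℝ let θ_τ ω(ξ) = ω(ξ + τ) - ω(τ). Then for every β > 0, e^{βτ} r(θ_τ ω) → 0 as τ → -∞. -/

import Mathlib

/-! Linear growth of `ω` gives `1 + |ω (τ + ξ) - ω τ| ≤ C (1 + |τ|) (1 + |ξ|)`, so with
`p = γ + 1 ≥ 2` the integrand is at most `3 C ^ p (1 + |τ|) ^ p e ^ {σ ξ} (1 + |ξ|) ^ p`, and the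
last factor is integrable on `(-∞, 0]`. Hence `r (θ_τ ω)` grows at most polynomially in `|τ|`,
which `e ^ {β τ}` beats as `τ → -∞`. -/

open MeasureTheory Real Set Filter

theorem tendsto_exp_mul_mul_one_add_abs_rpow_atBot (p : ℝ) {c : ℝ} (hc : 0 < c) :
    Tendsto (fun x : ℝ => exp (c * x) * (1 + |x|) ^ p) atBot (nhds 0) := by
  have h : Tendsto (fun x : ℝ => exp c * ((1 + -x) ^ p * exp (-c * (1 + -x)))) atBot (nhds 0) := by
    simpa using ((tendsto_rpow_mul_exp_neg_mul_atTop_nhds_zero p c hc).comp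
      (tendsto_atTop_add_const_left _ 1 tendsto_neg_atBot_atTop)).const_mul (exp c)
  refine h.congr' ?_
  filter_upwards [eventually_le_atBot 0] with x hx
  rw [abs_of_nonpos hx, mul_left_comm, ← exp_add]
  ring_nf

theorem integrableOn_exp_mul_mul_one_add_abs_rpow_Iic (p : ℝ) {c : ℝ} (hc : 0 < c) (a : ℝ) :
    IntegrableOn (fun x : ℝ => exp (c * x) * (1 + |x|) ^ p) (Iic a) := by
  have hcont : Continuous fun x : ℝ => exp (c * x) * (1 + |x|) ^ p := by
    refine (continuous_const.mul continuous_id).rexp.mul ?_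
    exact (continuous_const.add continuous_abs).rpow_const fun x =>
      Or.inl (by positivity : (1 : ℝ) + |x| ≠ 0)
  have hO : (fun x : ℝ => exp (c * x) * (1 + |x|) ^ p) =O[atBot] fun x => exp (c / 2 * x) := by
    have h := ((tendsto_exp_mul_mul_one_add_abs_rpow_atBot p (half_pos hc)).isBigO_one ℝ).mul
      (Asymptotics.isBigO_refl (fun x : ℝ => exp (c / 2 * x)) atBot)
    refine (h.congr_left fun x => ?_).congr_right fun x => one_mul _
    rw [mul_right_comm, ← exp_add]
    ring_nf
  exact hcont.locallyIntegrable.locallyIntegrableOn _ |>.integrableOn_of_isBigO_atBot hO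
    ⟨Iic 0, Iic_mem_atBot 0, integrableOn_exp_mul_Iic (half_pos hc) 0⟩

theorem one_add_sq_add_rpow_le {x p : ℝ} (hx : 0 ≤ x) (hp : 2 ≤ p) :
    1 + x ^ 2 + x ^ p ≤ 3 * (1 + x) ^ p := by
  have h1 : 1 ≤ 1 + x := by linarith
  have hone : 1 ≤ (1 + x) ^ p := one_le_rpow h1 (by linarith)
  have hsq : x ^ 2 ≤ (1 + x) ^ p :=
    calc x ^ 2 ≤ (1 + x) ^ (2 : ℝ) := by rw [rpow_two]; gcongr; linarith
      _ ≤ (1 + x) ^ p := rpow_le_rpow_of_exponent_le h1 hp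
  have hpow : x ^ p ≤ (1 + x) ^ p := rpow_le_rpow hx (by linarith) (by linarith)
  linarith

theorem one_add_abs_sub_le_of_abs_le_linear {f : ℝ → ℝ} {a b : ℝ} (ha : 0 ≤ a) (hb : 0 ≤ b)
    (hf : ∀ x, |f x| ≤ a + b * |x|) (x y : ℝ) :
    1 + |f (x + y) - f x| ≤ (1 + 2 * a + 2 * b) * ((1 + |x|) * (1 + |y|)) := by
  have hsub : |f (x + y) - f x| ≤ 2 * a + 2 * b * |x| + b * |y| := by
    nlinarith [abs_sub (f (x + y)) (f x), hf (x + y), hf x, abs_add_le x y]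
  have hxy : 0 ≤ |x| * |y| := by positivity
  nlinarith [abs_nonneg x, abs_nonneg y, mul_nonneg ha hxy, mul_nonneg hb hxy,
    mul_nonneg ha (abs_nonneg y), mul_nonneg hb (abs_nonneg y), mul_nonneg ha (abs_nonneg x)]

theorem exp_mul_mul_one_add_sq_add_rpow_le {f : ℝ → ℝ} {a b p : ℝ} (ha : 0 ≤ a) (hb : 0 ≤ b)
    (hf : ∀ x, |f x| ≤ a + b * |x|) (hp : 2 ≤ p) (c x y : ℝ) :
    exp (c * y) * (1 + |f (x + y) - f x| ^ 2 + |f (x + y) - f x| ^ p) ≤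
      3 * (1 + 2 * a + 2 * b) ^ p * (1 + |x|) ^ p * (exp (c * y) * (1 + |y|) ^ p) := by
  have hp0 : 0 ≤ p := by linarith
  calc exp (c * y) * (1 + |f (x + y) - f x| ^ 2 + |f (x + y) - f x| ^ p)
      ≤ exp (c * y) * (3 * (1 + |f (x + y) - f x|) ^ p) := by
        gcongr; exact one_add_sq_add_rpow_le (abs_nonneg _) hp
    _ ≤ exp (c * y) * (3 * ((1 + 2 * a + 2 * b) * ((1 + |x|) * (1 + |y|))) ^ p) := by
        gcongr; exact one_add_abs_sub_le_of_abs_le_linear ha hb hf x y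
    _ = 3 * (1 + 2 * a + 2 * b) ^ p * (1 + |x|) ^ p * (exp (c * y) * (1 + |y|) ^ p) := by
        rw [mul_rpow (by positivity) (by positivity), mul_rpow (by positivity) (by positivity)]
        ring

theorem stmt3_general
    (ω : ℝ → ℝ)
    (a b : ℝ) (ha : 0 < a) (hb : 0 < b)
    (hgrowth : ∀ ξ, |ω ξ| ≤ a + b * |ξ|)
    (σ γ : ℝ) (hσ : 0 < σ) (hγ : 1 ≤ γ)
    (β : ℝ) (hβ : 0 < β) :
    Tendsto
      (fun τ : ℝ =>
        Real.exp (β * τ) *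
          ∫ ξ in Set.Iic (0 : ℝ),
            Real.exp (σ * ξ) *
              (1 + |ω (τ + ξ) - ω τ| ^ 2 + |ω (τ + ξ) - ω τ| ^ (γ + 1)))
      atBot (nhds 0) := by
  set p := γ + 1
  set C := 3 * (1 + 2 * a + 2 * b) ^ p * ∫ ξ in Iic (0 : ℝ), exp (σ * ξ) * (1 + |ξ|) ^ p
  have hint := integrableOn_exp_mul_mul_one_add_abs_rpow_Iic p hσ 0
  have hbound : ∀ τ, (∫ ξ in Iic (0 : ℝ), exp (σ * ξ) *
      (1 + |ω (τ + ξ) - ω τ| ^ 2 + |ω (τ + ξ) - ω τ| ^ p)) ≤ C * (1 + |τ|) ^ p := fun τ =>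
    calc _ ≤ ∫ ξ in Iic (0 : ℝ), 3 * (1 + 2 * a + 2 * b) ^ p * (1 + |τ|) ^ p *
          (exp (σ * ξ) * (1 + |ξ|) ^ p) :=
          integral_mono_of_nonneg (.of_forall fun ξ => by positivity) (hint.const_mul _)
            (.of_forall fun ξ => exp_mul_mul_one_add_sq_add_rpow_le ha.le hb.le hgrowth
              (by linarith) σ τ ξ)
      _ = C * (1 + |τ|) ^ p := by rw [integral_const_mul]; ring
  refine squeeze_zero (fun τ => mul_nonneg (exp_pos _).le
    (setIntegral_nonneg measurableSet_Iic fun ξ _ => by positivity)) (fun τ => ?_)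
    (by simpa using (tendsto_exp_mul_mul_one_add_abs_rpow_atBot p hβ).const_mul C)
  calc _ ≤ exp (β * τ) * (C * (1 + |τ|) ^ p) := by gcongr; exact hbound τ
    _ = C * (exp (β * τ) * (1 + |τ|) ^ p) := by ring

theorem stmt3
    (ω : ℝ → ℝ) (hω : Continuous ω) (hω0 : ω 0 = 0)
    (a b : ℝ) (ha : 0 < a) (hb : 0 < b)
    (hgrowth : ∀ ξ, |ω ξ| ≤ a + b * |ξ|)
    (σ γ : ℝ) (hσ : 0 < σ) (hγ : 1 ≤ γ)
    (β : ℝ) (hβ : 0 < β) :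
    Tendsto
      (fun τ : ℝ =>
        Real.exp (β * τ) *
          ∫ ξ in Set.Iic (0 : ℝ),
            Real.exp (σ * ξ) *
              (1 + |ω (τ + ξ) - ω τ| ^ 2 + |ω (τ + ξ) - ω τ| ^ (γ + 1)))
      atBot (nhds 0) :=
  stmt3_general ω a b ha hb hgrowth σ γ hσ hγ β hβ
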